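/- Let U ⊆ [0, π) with 0 ∈ U and |U| ≥ 3, fix distinct α, β ∈ U \ {0}, and let p(γ) be the γ-projection of ⟦0,1⟧ for γ ∈ U \ {0}. Let Δ = { p(γ) − p(δ) : γ, δ ∈ U \ {0}, γ ≠ δ } and Δ⁻¹ = { d⁻¹ : d ∈ Δ }. Then the subring ℤ[Δ, Δ⁻¹] of ℝ generated by Δ ∪ Δ⁻¹ is contained in M_ℝ. -/

import Mathlib

open Real Complex Set

/-- The `θ`-projection of `z`: the unique real `x` with `z ∈ x + ℝ·exp(iθ)`
(for `θ ∈ (0,π)`); explicitly `x = Re z − Im z · cos θ / sin θ`. -/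
noncomputable def proj (θ : ℝ) (z : ℂ) : ℝ := z.re - z.im * Real.cos θ / Real.sin θ

/-- `inter α β r s` is the (unique, for distinct `α β ∈ (0,π)`) complex number
with `α`-projection `r` and `β`-projection `s`, i.e. `⟦r,s⟧_{α,β}`. -/
noncomputable def inter (α β r s : ℝ) : ℂ :=
  Classical.epsilon fun z : ℂ => proj α z = r ∧ proj β z = s

/-- The line through `z` with slope (angle) `θ`. -/
def lineThru (z : ℂ) (θ : ℝ) : Set ℂ := {w | ∃ t : ℝ, w = z + t * Complex.exp (θ * Complex.I)}

/-- The recursively defined stages of the origami set. -/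
def origamiStep (U : Set ℝ) : ℕ → Set ℂ
  | 0 => {0, 1}
  | k + 1 => {w | ∃ z ∈ origamiStep U k, ∃ z' ∈ origamiStep U k,
      ∃ γ ∈ U, ∃ γ' ∈ U, γ ≠ γ' ∧ w ∈ lineThru z γ ∧ w ∈ lineThru z' γ'}

/-- The origami set `M(U)`. -/
def origami (U : Set ℝ) : Set ℂ := ⋃ k, origamiStep U k

/-- The real part `M_ℝ = M(U) ∩ ℝ`, viewed as a set of reals. -/
def origamiR (U : Set ℝ) : Set ℝ := {x : ℝ | (x : ℂ) ∈ origami U}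

/-!
Write `p θ` for the `θ`-projection of `z₀ = ⟦0,1⟧`. Since `proj θ` is `ℝ`-linear and
`z₀` has projections `0` and `1` along `α` and `β`, the point `b z₀` is constructible for every
`b ∈ M_ℝ`. Sliding it horizontally until its `γ`-projection is `x` and then projecting along `δ`
gives `x + b (p δ - p γ) ∈ M_ℝ`. Taking `(γ, δ) = (α, β)` or `(β, α)` shows that `M_ℝ` is an
additive group, and `x = 0` that it is closed under multiplication by `Δ`. Division by
`d = p γ - p δ ∈ Δ` comes from the point with `γ`-projection `x` and `δ`-projection `0`, which is
`(x / d) z₀ - (x / d) p δ`. An additive group containing `1` and stable under multiplication by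
its generators contains the ring they generate.
-/

theorem Subring.closure_subset_of_mul_mem {R : Type*} [Ring R] {s : Set R} (S : AddSubgroup R)
    (h1 : (1 : R) ∈ S) (hmul : ∀ r ∈ s, ∀ x ∈ S, r * x ∈ S) :
    (Subring.closure s : Set R) ⊆ S := by
  intro r hr
  suffices ∀ x ∈ S, r * x ∈ S by simpa using this 1 h1
  induction hr using Subring.closure_induction with
  | mem r hr => exact hmul r hr
  | zero => simp [S.zero_mem]
  | one => simp
  | add r r' _ _ hr hr' =>
    exact fun x hx => by simpa [add_mul] using S.add_mem (hr x hx) (hr' x hx)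
  | neg r _ hr => exact fun x hx => by simpa using S.neg_mem (hr x hx)
  | mul r r' _ _ hr hr' => exact fun x hx => by simpa [mul_assoc] using hr _ (hr' x hx)

@[simp]
lemma proj_ofReal (θ r : ℝ) : proj θ r = r := by simp [proj]

@[simp]
lemma proj_zero (θ : ℝ) : proj θ 0 = 0 := by simp [proj]

@[simp]
lemma proj_add (θ : ℝ) (z w : ℂ) : proj θ (z + w) = proj θ z + proj θ w := by
  simp only [proj, add_re, add_im]; ring

@[simp]
lemma proj_sub (θ : ℝ) (z w : ℂ) : proj θ (z - w) = proj θ z - proj θ w := by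
  simp only [proj, sub_re, sub_im]; ring

@[simp]
lemma proj_ofReal_mul (θ r : ℝ) (z : ℂ) : proj θ (r * z) = r * proj θ z := by
  simp only [proj, re_ofReal_mul, im_ofReal_mul]; ring

lemma mem_lineThru_iff_proj_eq {θ : ℝ} (hθ : θ ∈ Ioo 0 π) {z w : ℂ} :
    w ∈ lineThru z θ ↔ proj θ w = proj θ z := by
  have hs : Real.sin θ ≠ 0 := (Real.sin_pos_of_pos_of_lt_pi hθ.1 hθ.2).ne'
  constructor
  · rintro ⟨t, rfl⟩
    simp only [proj, add_re, add_im, re_ofReal_mul, im_ofReal_mul, exp_ofReal_mul_I_re,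
      exp_ofReal_mul_I_im]
    field_simp
    ring
  · intro h
    refine ⟨(w.im - z.im) / Real.sin θ, Complex.ext ?_ ?_⟩
    · simp only [proj] at h
      simp only [add_re, re_ofReal_mul, exp_ofReal_mul_I_re]
      field_simp at h ⊢
      linarith
    · simp only [add_im, im_ofReal_mul, exp_ofReal_mul_I_im]
      field_simp
      ring

lemma mem_lineThru_zero_iff {z w : ℂ} : w ∈ lineThru z 0 ↔ w.im = z.im := by
  constructor
  · rintro ⟨t, rfl⟩
    simp
  · intro h
    exact ⟨w.re - z.re, Complex.ext (by simp) (by simp [h])⟩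

lemma cos_div_sin_injOn : InjOn (fun θ => Real.cos θ / Real.sin θ) (Ioo 0 π) := by
  intro γ hγ δ hδ h
  have hsγ := (Real.sin_pos_of_pos_of_lt_pi hγ.1 hγ.2).ne'
  have hsδ := (Real.sin_pos_of_pos_of_lt_pi hδ.1 hδ.2).ne'
  have hsin : Real.sin (δ - γ) = 0 := by
    simp only at h
    field_simp at h
    rw [Real.sin_sub]
    linarith
  rw [Real.sin_eq_zero_iff_of_lt_of_lt (by linarith [hγ.2, hδ.1]) (by linarith [hγ.1, hδ.2])]
    at hsin
  linarith

section Origami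

variable {U : Set ℝ}

lemma zero_mem_origamiR : (0 : ℝ) ∈ origamiR U := mem_iUnion.mpr ⟨0, by simp [origamiStep]⟩

lemma one_mem_origamiR : (1 : ℝ) ∈ origamiR U := mem_iUnion.mpr ⟨0, by simp [origamiStep]⟩

lemma origamiStep_monotone {γ γ' : ℝ} (hγ : γ ∈ U) (hγ' : γ' ∈ U) (hne : γ ≠ γ') :
    Monotone (origamiStep U) :=
  monotone_nat_of_le_succ fun _ z hz =>
    ⟨z, hz, z, hz, γ, hγ, γ', hγ', hne, ⟨0, by simp⟩, ⟨0, by simp⟩⟩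

lemma mem_origami_of_mem_lineThru {γ γ' : ℝ} (hγ : γ ∈ U) (hγ' : γ' ∈ U) (hne : γ ≠ γ')
    {z z' w : ℂ} (hz : z ∈ origami U) (hz' : z' ∈ origami U)
    (hw : w ∈ lineThru z γ) (hw' : w ∈ lineThru z' γ') : w ∈ origami U := by
  obtain ⟨k, hk⟩ := mem_iUnion.mp hz
  obtain ⟨k', hk'⟩ := mem_iUnion.mp hz'
  have mono := origamiStep_monotone hγ hγ' hne
  exact mem_iUnion.mpr ⟨max k k' + 1, z, mono (le_max_left k k') hk,
    z', mono (le_max_right k k') hk', γ, hγ, γ', hγ', hne, hw, hw'⟩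

lemma mem_Ioo_of_mem_diff (hU : U ⊆ Ico 0 π) {θ : ℝ} (hθ : θ ∈ U \ {0}) : θ ∈ Ioo 0 π :=
  ⟨(hU hθ.1).1.lt_of_ne' hθ.2, (hU hθ.1).2⟩

lemma mem_origami_of_proj_eq (hU : U ⊆ Ico 0 π) {γ δ : ℝ} (hγ : γ ∈ U \ {0})
    (hδ : δ ∈ U \ {0}) (hγδ : γ ≠ δ) {z z' w : ℂ} (hz : z ∈ origami U) (hz' : z' ∈ origami U)
    (hwz : proj γ w = proj γ z) (hwz' : proj δ w = proj δ z') : w ∈ origami U :=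
  mem_origami_of_mem_lineThru hγ.1 hδ.1 hγδ hz hz'
    ((mem_lineThru_iff_proj_eq (mem_Ioo_of_mem_diff hU hγ)).2 hwz)
    ((mem_lineThru_iff_proj_eq (mem_Ioo_of_mem_diff hU hδ)).2 hwz')

lemma mem_origami_of_im_eq (hU : U ⊆ Ico 0 π) (h0 : (0 : ℝ) ∈ U) {θ : ℝ} (hθ : θ ∈ U \ {0})
    {z z' w : ℂ} (hz : z ∈ origami U) (hz' : z' ∈ origami U)
    (hwz : w.im = z.im) (hwz' : proj θ w = proj θ z') : w ∈ origami U :=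
  mem_origami_of_mem_lineThru h0 hθ.1 (Ne.symm hθ.2) hz hz'
    (mem_lineThru_zero_iff.2 hwz) ((mem_lineThru_iff_proj_eq (mem_Ioo_of_mem_diff hU hθ)).2 hwz')

lemma proj_mem_origamiR (hU : U ⊆ Ico 0 π) (h0 : (0 : ℝ) ∈ U) {θ : ℝ} (hθ : θ ∈ U \ {0})
    {z : ℂ} (hz : z ∈ origami U) : proj θ z ∈ origamiR U :=
  mem_origami_of_im_eq hU h0 hθ zero_mem_origamiR hz (by simp) (by simp)

lemma ofReal_add_sub_proj_mem_origami (hU : U ⊆ Ico 0 π) (h0 : (0 : ℝ) ∈ U) {θ : ℝ}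
    (hθ : θ ∈ U \ {0}) {x : ℝ} (hx : x ∈ origamiR U) {z : ℂ} (hz : z ∈ origami U) :
    (x : ℂ) + z - proj θ z ∈ origami U :=
  mem_origami_of_im_eq hU h0 hθ hz hx (by simp) (by simp)

end Origami

lemma proj_inter {α β : ℝ} (hα : α ∈ Ioo 0 π) (hβ : β ∈ Ioo 0 π) (hαβ : α ≠ β) (r s : ℝ) :
    proj α (inter α β r s) = r ∧ proj β (inter α β r s) = s := by
  have hsα := (Real.sin_pos_of_pos_of_lt_pi hα.1 hα.2).ne'
  have hsβ := (Real.sin_pos_of_pos_of_lt_pi hβ.1 hβ.2).ne'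
  have hd : Real.cos β / Real.sin β - Real.cos α / Real.sin α ≠ 0 :=
    sub_ne_zero.2 fun h => hαβ (cos_div_sin_injOn hα hβ h.symm)
  set t := (r - s) / (Real.cos β / Real.sin β - Real.cos α / Real.sin α)
  refine Classical.epsilon_spec (p := fun z : ℂ => proj α z = r ∧ proj β z = s)
    ⟨⟨r + t * (Real.cos α / Real.sin α), t⟩, ?_, ?_⟩
  · simp only [proj]
    ring
  · have htd : t * (Real.cos β / Real.sin β - Real.cos α / Real.sin α) = r - s :=
      div_mul_cancel₀ _ hd
    simp only [proj]
    rw [mul_div_assoc]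
    linear_combination -htd

section UnitPoint

variable {U : Set ℝ} {α β : ℝ} {z₀ : ℂ}

lemma ofReal_mul_mem_origami (hU : U ⊆ Ico 0 π) (hα : α ∈ U \ {0}) (hβ : β ∈ U \ {0})
    (hαβ : α ≠ β) (hzα : proj α z₀ = 0) (hzβ : proj β z₀ = 1) {b : ℝ} (hb : b ∈ origamiR U) :
    (b : ℂ) * z₀ ∈ origami U :=
  mem_origami_of_proj_eq hU hα hβ hαβ zero_mem_origamiR hb (by simp [hzα]) (by simp [hzβ])

lemma add_mul_sub_proj_mem_origamiR (hU : U ⊆ Ico 0 π) (h0 : (0 : ℝ) ∈ U)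
    (hα : α ∈ U \ {0}) (hβ : β ∈ U \ {0}) (hαβ : α ≠ β) (hzα : proj α z₀ = 0)
    (hzβ : proj β z₀ = 1) {γ δ : ℝ} (hγ : γ ∈ U \ {0}) (hδ : δ ∈ U \ {0}) {x b : ℝ}
    (hx : x ∈ origamiR U) (hb : b ∈ origamiR U) :
    x + b * (proj δ z₀ - proj γ z₀) ∈ origamiR U := by
  have := proj_mem_origamiR hU h0 hδ <| ofReal_add_sub_proj_mem_origami hU h0 hγ hx <|
    ofReal_mul_mem_origami hU hα hβ hαβ hzα hzβ hb
  convert this using 1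
  simp only [proj_sub, proj_add, proj_ofReal, proj_ofReal_mul]
  ring

lemma sub_mem_origamiR (hU : U ⊆ Ico 0 π) (h0 : (0 : ℝ) ∈ U)
    (hα : α ∈ U \ {0}) (hβ : β ∈ U \ {0}) (hαβ : α ≠ β) (hzα : proj α z₀ = 0)
    (hzβ : proj β z₀ = 1) {x y : ℝ} (hx : x ∈ origamiR U) (hy : y ∈ origamiR U) :
    x - y ∈ origamiR U := by
  simpa [hzα, hzβ, sub_eq_add_neg] using
    add_mul_sub_proj_mem_origamiR hU h0 hα hβ hαβ hzα hzβ hβ hα hx hy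

lemma proj_sub_proj_mul_mem_origamiR (hU : U ⊆ Ico 0 π) (h0 : (0 : ℝ) ∈ U)
    (hα : α ∈ U \ {0}) (hβ : β ∈ U \ {0}) (hαβ : α ≠ β) (hzα : proj α z₀ = 0)
    (hzβ : proj β z₀ = 1) {γ δ : ℝ} (hγ : γ ∈ U \ {0}) (hδ : δ ∈ U \ {0}) {x : ℝ}
    (hx : x ∈ origamiR U) : (proj γ z₀ - proj δ z₀) * x ∈ origamiR U := by
  simpa [mul_comm] using
    add_mul_sub_proj_mem_origamiR hU h0 hα hβ hαβ hzα hzβ hδ hγ zero_mem_origamiR hx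

lemma proj_sub_proj_ne_zero (hU : U ⊆ Ico 0 π) (hzα : proj α z₀ = 0) (hzβ : proj β z₀ = 1)
    {γ δ : ℝ} (hγ : γ ∈ U \ {0}) (hδ : δ ∈ U \ {0}) (hγδ : γ ≠ δ) : proj γ z₀ - proj δ z₀ ≠ 0 := by
  have him : z₀.im ≠ 0 := by
    intro h
    simp only [proj, h, zero_mul, zero_div, sub_zero] at hzα hzβ
    simp [hzα] at hzβ
  have hcot := cos_div_sin_injOn.ne (mem_Ioo_of_mem_diff hU hγ) (mem_Ioo_of_mem_diff hU hδ) hγδ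
  have : proj γ z₀ - proj δ z₀ = z₀.im * (Real.cos δ / Real.sin δ - Real.cos γ / Real.sin γ) := by
    simp only [proj]
    ring
  rw [this]
  exact mul_ne_zero him (sub_ne_zero.2 (Ne.symm hcot))

lemma inv_proj_sub_proj_mul_mem_origamiR (hU : U ⊆ Ico 0 π) (h0 : (0 : ℝ) ∈ U)
    (hα : α ∈ U \ {0}) (hβ : β ∈ U \ {0}) (hαβ : α ≠ β) (hzα : proj α z₀ = 0)
    (hzβ : proj β z₀ = 1) {γ δ : ℝ} (hγ : γ ∈ U \ {0}) (hδ : δ ∈ U \ {0}) (hγδ : γ ≠ δ)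
    {x : ℝ} (hx : x ∈ origamiR U) : (proj γ z₀ - proj δ z₀)⁻¹ * x ∈ origamiR U := by
  have hd := proj_sub_proj_ne_zero hU hzα hzβ hγ hδ hγδ
  set c := (proj γ z₀ - proj δ z₀)⁻¹ * x
  have hw : (c : ℂ) * z₀ - (c * proj δ z₀ : ℝ) ∈ origami U := by
    refine mem_origami_of_proj_eq hU hγ hδ hγδ hx zero_mem_origamiR ?_ ?_
    · simp only [proj_sub, proj_ofReal_mul, proj_ofReal, c]
      field_simp
    · simp
  have := sub_mem_origamiR hU h0 hα hβ hαβ hzα hzβ (proj_mem_origamiR hU h0 hβ hw)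
    (proj_mem_origamiR hU h0 hα hw)
  simpa [hzα, hzβ] using this

end UnitPoint

theorem closure_subset_origamiR_general (U : Set ℝ) (hU : U ⊆ Set.Ico 0 Real.pi) (h0 : (0 : ℝ) ∈ U)
    (α β : ℝ) (hα : α ∈ U) (hβ : β ∈ U)
    (hα0 : α ≠ 0) (hβ0 : β ≠ 0) (hαβ : α ≠ β)
    (Δ : Set ℝ)
    (hΔ : Δ = {x : ℝ | ∃ γ ∈ U \ {0}, ∃ δ ∈ U \ {0},
        γ ≠ δ ∧ x = proj γ (inter α β 0 1) - proj δ (inter α β 0 1)}) :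
    (Subring.closure (Δ ∪ (fun d : ℝ => d⁻¹) '' Δ) : Set ℝ) ⊆ origamiR U := by
  have hα' : α ∈ U \ {0} := ⟨hα, hα0⟩
  have hβ' : β ∈ U \ {0} := ⟨hβ, hβ0⟩
  obtain ⟨hzα, hzβ⟩ := proj_inter (mem_Ioo_of_mem_diff hU hα') (mem_Ioo_of_mem_diff hU hβ') hαβ 0 1
  have hsub {x y : ℝ} (hx : x ∈ origamiR U) (hy : y ∈ origamiR U) : x - y ∈ origamiR U :=
    sub_mem_origamiR hU h0 hα' hβ' hαβ hzα hzβ hx hy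
  let S : AddSubgroup ℝ :=
    { carrier := origamiR U
      zero_mem' := zero_mem_origamiR
      add_mem' := fun hx hy => by simpa using hsub hx (hsub zero_mem_origamiR hy)
      neg_mem' := fun hx => by simpa using hsub zero_mem_origamiR hx }
  subst hΔ
  refine Subring.closure_subset_of_mul_mem S one_mem_origamiR ?_
  rintro _ (⟨γ, hγ, δ, hδ, -, rfl⟩ | ⟨_, ⟨γ, hγ, δ, hδ, hγδ, rfl⟩, rfl⟩) x hx
  · exact proj_sub_proj_mul_mem_origamiR hU h0 hα' hβ' hαβ hzα hzβ hγ hδ hx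
  · exact inv_proj_sub_proj_mul_mem_origamiR hU h0 hα' hβ' hαβ hzα hzβ hγ hδ hγδ hx

theorem closure_subset_origamiR (U : Set ℝ) (hU : U ⊆ Set.Ico 0 Real.pi) (h0 : (0 : ℝ) ∈ U)
    (hcard : 3 ≤ U.encard) (α β : ℝ) (hα : α ∈ U) (hβ : β ∈ U)
    (hα0 : α ≠ 0) (hβ0 : β ≠ 0) (hαβ : α ≠ β)
    (Δ : Set ℝ)
    (hΔ : Δ = {x : ℝ | ∃ γ ∈ U \ {0}, ∃ δ ∈ U \ {0},
        γ ≠ δ ∧ x = proj γ (inter α β 0 1) - proj δ (inter α β 0 1)}) :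
    (Subring.closure (Δ ∪ (fun d : ℝ => d⁻¹) '' Δ) : Set ℝ) ⊆ origamiR U :=
  closure_subset_origamiR_general U hU h0 α β hα hβ hα0 hβ0 hαβ Δ hΔ
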